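/- arXiv:2111.13839 — 2 statements merged into one kernel-verified Lean document; each statement's English description precedes it below -/
import Mathlib

section
/- Two-domain adaptation bound. Let μ and ν be probability measures on X. Then for every h, h⋆ ∈ H: ε_ν(h) ≤ ε_ν(h⋆) + ε_μ(h⋆) + ε_μ(h) + d_H(μ, ν). -/
/-!
Write `d_κ(g, g')` for the `κ`-probability that `g` and `g'` disagree, so that `ε_κ(h) = d_κ(h, f)`.
Each `d_κ` satisfies the triangle inequality, and for `h, h⋆ ∈ H` the definition of the
divergence gives `d_ν(h, h⋆) ≤ d_μ(h, h⋆) + d_H(μ, ν)`. Hence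
`ε_ν(h) ≤ ε_ν(h⋆) + d_ν(h, h⋆) ≤ ε_ν(h⋆) + d_μ(h, h⋆) + d_H(μ, ν)
  ≤ ε_ν(h⋆) + ε_μ(h) + ε_μ(h⋆) + d_H(μ, ν)`.
-/

open MeasureTheory

/-- The 0-1 risk of a hypothesis `h` under distribution `μ` w.r.t. labeling `f`. -/
noncomputable def risk {X : Type*} [MeasurableSpace X]
    (μ : Measure X) (f h : X → Bool) : ℝ :=
  (μ {x | h x ≠ f x}).toReal

/-- The H-divergence of two measures with respect to a hypothesis class `H`. -/
noncomputable def dH {X : Type*} [MeasurableSpace X]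
    (H : Set (X → Bool)) (μ ν : Measure X) : ℝ :=
  sSup {d : ℝ | ∃ h ∈ H, ∃ h' ∈ H,
    d = |(μ {x | h x ≠ h' x}).toReal - (ν {x | h x ≠ h' x}).toReal|}

theorem setOf_ne_subset_union {X Y : Type*} (g g' g'' : X → Y) :
    {x | g x ≠ g'' x} ⊆ {x | g x ≠ g' x} ∪ {x | g' x ≠ g'' x} := by
  intro x hx
  by_contra hmem
  simp only [Set.mem_union, Set.mem_ofPred_eq, not_or, not_not] at hmem
  exact hx (hmem.1.trans hmem.2)

section Disagreement

variable {X Y : Type*} [MeasurableSpace X]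

noncomputable def disagreement (μ : Measure X) (g g' : X → Y) : ℝ :=
  μ.real {x | g x ≠ g' x}

variable {μ : Measure X}

theorem risk_eq_disagreement (f h : X → Bool) : risk μ f h = disagreement μ h f := rfl

theorem disagreement_comm (g g' : X → Y) : disagreement μ g g' = disagreement μ g' g := by
  simp only [disagreement, ne_comm]

theorem disagreement_triangle [IsFiniteMeasure μ] (g g' g'' : X → Y) :
    disagreement μ g g'' ≤ disagreement μ g g' + disagreement μ g' g'' :=
  (measureReal_mono (setOf_ne_subset_union g g' g'')).trans (measureReal_union_le _ _)

theorem disagreement_mem_Icc [IsProbabilityMeasure μ] (g g' : X → Y) :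
    disagreement μ g g' ∈ Set.Icc 0 1 :=
  ⟨measureReal_nonneg, measureReal_le_one⟩

end Disagreement

section Divergence

variable {X : Type*} [MeasurableSpace X] {μ ν : Measure X} [IsProbabilityMeasure μ]
  [IsProbabilityMeasure ν] {H : Set (X → Bool)}

theorem bddAbove_dH_set : BddAbove {d : ℝ | ∃ h ∈ H, ∃ h' ∈ H,
    d = |(μ {x | h x ≠ h' x}).toReal - (ν {x | h x ≠ h' x}).toReal|} := by
  refine ⟨1, ?_⟩
  rintro d ⟨g, -, g', -, rfl⟩
  obtain ⟨hμ₀, hμ₁⟩ := disagreement_mem_Icc (μ := μ) g g'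
  obtain ⟨hν₀, hν₁⟩ := disagreement_mem_Icc (μ := ν) g g'
  exact abs_sub_le_of_nonneg_of_le hμ₀ hμ₁ hν₀ hν₁

theorem disagreement_sub_le_dH {h h' : X → Bool} (hh : h ∈ H) (hh' : h' ∈ H) :
    disagreement ν h h' - disagreement μ h h' ≤ dH H μ ν :=
  calc disagreement ν h h' - disagreement μ h h'
      ≤ |disagreement μ h h' - disagreement ν h h'| := by
        rw [abs_sub_comm]; exact le_abs_self _
    _ ≤ dH H μ ν := le_csSup bddAbove_dH_set ⟨h, hh, h', hh', rfl⟩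

end Divergence

theorem two_domain_adaptation_bound_general
    {X : Type*} [MeasurableSpace X]
    (μ ν : Measure X) [IsProbabilityMeasure μ] [IsProbabilityMeasure ν]
    (f : X → Bool)
    (H : Set (X → Bool))
    (h hstar : X → Bool) (hhH : h ∈ H) (hhstarH : hstar ∈ H) :
    risk ν f h ≤ risk ν f hstar + risk μ f hstar + risk μ f h + dH H μ ν := by
  simp only [risk_eq_disagreement]
  have hν := disagreement_triangle (μ := ν) h hstar f
  have hμ := disagreement_triangle (μ := μ) h f hstar
  have hshift := disagreement_sub_le_dH (μ := μ) (ν := ν) hhH hhstarH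
  rw [disagreement_comm f hstar] at hμ
  linarith

/-- Two-domain adaptation bound. -/
theorem two_domain_adaptation_bound
    {X : Type*} [MeasurableSpace X]
    (μ ν : Measure X) [IsProbabilityMeasure μ] [IsProbabilityMeasure ν]
    (f : X → Bool) (hf : Measurable f)
    (H : Set (X → Bool)) (hH : H.Nonempty) (hHmeas : ∀ h ∈ H, Measurable h)
    (h hstar : X → Bool) (hhH : h ∈ H) (hhstarH : hstar ∈ H) :
    risk ν f h ≤ risk ν f hstar + risk μ f hstar + risk μ f h + dH H μ ν :=
  two_domain_adaptation_bound_general μ ν f H h hstar hhH hhstarH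
end

section
/- Domain generalization bound via a fictitious distribution (Eq. (14) of the paper). Let ν (the unseen target), ρ (the fictitious distribution), and μ₁, …, μ_N (the source domains) be probability measures on X, and let α ∈ ℝ^N with α_i ≥ 0 and Σ_i α_i = 1; write μ_α = Σ_i α_i μ_i for the mixture source distribution. Then for every h, h⋆ ∈ H: ε_ν(h) ≤ (ε_ν(h⋆) + Σ_i α_i ε_{μ_i}(h⋆)) + Σ_i α_i ε_{μ_i}(h) + d_H(ρ, μ_α) + d_H(ν, ρ). (Taking h⋆ to be the joint-risk-optimal hypothesis, the first parenthesized term is the ideal joint risk λ_α; the remaining terms are the empirical source risk, the divergence between the fictitious distribution and the source mixture, and the diversity term d_H(ν, ρ).) -/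
open MeasureTheory

/-!
The risk `ε_μ(h) = μ{h ≠ f}` is the distance from `h` to `f` in the disagreement pseudometric
`(g, g') ↦ μ{g ≠ g'}`. One triangle inequality in `ν` gives `ε_ν(h) ≤ ε_ν(h⋆) + ν{h ≠ h⋆}`;
the definition of `d_H` moves the disagreement `{h ≠ h⋆}` from `ν` to `ρ` and from `ρ` to
`μ_α`, and a second triangle inequality in each `μ_i` bounds `μ_i{h ≠ h⋆}` by
`ε_{μ_i}(h) + ε_{μ_i}(h⋆)`.
-/

section Disagreement

variable {X β : Type*} [MeasurableSpace X] (μ : Measure X) [IsFiniteMeasure μ]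

theorem measureReal_setOf_ne_le_add (a b c : X → β) :
    μ.real {x | a x ≠ c x} ≤ μ.real {x | a x ≠ b x} + μ.real {x | b x ≠ c x} := by
  refine (measureReal_mono fun x hac => ?_).trans (measureReal_union_le _ _)
  by_contra! hx
  simp_all

theorem risk_le_risk_add_measureReal_ne (f h h' : X → Bool) :
    risk μ f h ≤ risk μ f h' + μ.real {x | h x ≠ h' x} :=
  (measureReal_setOf_ne_le_add μ h h' f).trans_eq (add_comm _ _)

theorem measureReal_ne_le_risk_add_risk (f h h' : X → Bool) :
    μ.real {x | h x ≠ h' x} ≤ risk μ f h + risk μ f h' := by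
  have hcomm : {x | f x ≠ h' x} = {x | h' x ≠ f x} := Set.ext fun _ => ne_comm
  have := measureReal_setOf_ne_le_add μ h f h'
  rwa [hcomm] at this

end Disagreement

theorem abs_sub_le_dH {X : Type*} [MeasurableSpace X] (H : Set (X → Bool))
    (μ ν : Measure X) [IsFiniteMeasure μ] [IsFiniteMeasure ν]
    {h h' : X → Bool} (hh : h ∈ H) (hh' : h' ∈ H) :
    |μ.real {x | h x ≠ h' x} - ν.real {x | h x ≠ h' x}| ≤ dH H μ ν := by
  refine le_csSup ⟨μ.real Set.univ + ν.real Set.univ, ?_⟩ ⟨h, hh, h', hh', rfl⟩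
  rintro d ⟨g, -, g', -, rfl⟩
  exact abs_sub_le_of_nonneg_of_le measureReal_nonneg
    ((measureReal_mono (Set.subset_univ _)).trans (le_add_of_nonneg_right measureReal_nonneg))
    measureReal_nonneg
    ((measureReal_mono (Set.subset_univ _)).trans (le_add_of_nonneg_left measureReal_nonneg))

instance {X : Type*} [MeasurableSpace X] (μ : Measure X) [IsFiniteMeasure μ] (c : ℝ) :
    IsFiniteMeasure (ENNReal.ofReal c • μ) :=
  μ.smul_finite ENNReal.ofReal_ne_top

theorem measureReal_sum_ofReal_smul_apply {X ι : Type*} [MeasurableSpace X] [Fintype ι]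
    (μ : ι → Measure X) [∀ i, IsFiniteMeasure (μ i)] {α : ι → ℝ} (hα : ∀ i, 0 ≤ α i)
    (s : Set X) :
    (∑ i, ENNReal.ofReal (α i) • μ i).real s = ∑ i, α i * (μ i).real s := by
  rw [measureReal_def, Measure.coe_finsetSum, Finset.sum_apply,
    ENNReal.toReal_sum fun i _ => measure_ne_top (ENNReal.ofReal (α i) • μ i) s]
  simp [measureReal_def, ENNReal.toReal_ofReal (hα _)]

theorem domain_generalization_fictitious_bound_general
    {X : Type*} [MeasurableSpace X]
    (f : X → Bool)
    (H : Set (X → Bool))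
    (ν ρ : Measure X) [IsProbabilityMeasure ν] [IsProbabilityMeasure ρ]
    (N : ℕ) (μ : Fin N → Measure X) [∀ i, IsProbabilityMeasure (μ i)]
    (α : Fin N → ℝ) (hα : ∀ i, 0 ≤ α i)
    (h hstar : X → Bool) (hhH : h ∈ H) (hhstarH : hstar ∈ H) :
    risk ν f h ≤
      (risk ν f hstar + ∑ i, α i * risk (μ i) f hstar)
        + ∑ i, α i * risk (μ i) f h
        + dH H ρ (∑ i, ENNReal.ofReal (α i) • μ i)
        + dH H ν ρ := by
  set μα := ∑ i, ENNReal.ofReal (α i) • μ i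
  set s := {x | h x ≠ hstar x}
  have hν := risk_le_risk_add_measureReal_ne ν f h hstar
  have hνρ := (abs_le.1 (abs_sub_le_dH H ν ρ hhH hhstarH)).2
  have hρμα := (abs_le.1 (abs_sub_le_dH H ρ μα hhH hhstarH)).2
  have hμα : μα.real s ≤ ∑ i, α i * risk (μ i) f h + ∑ i, α i * risk (μ i) f hstar := by
    rw [measureReal_sum_ofReal_smul_apply μ hα, ← Finset.sum_add_distrib]
    gcongr with i
    rw [← mul_add]
    exact mul_le_mul_of_nonneg_left (measureReal_ne_le_risk_add_risk (μ i) f h hstar) (hα i)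
  linarith

/-- Domain generalization bound via a fictitious distribution (Eq. (14) of the paper). -/
theorem domain_generalization_fictitious_bound
    {X : Type*} [MeasurableSpace X]
    (f : X → Bool) (hf : Measurable f)
    (H : Set (X → Bool)) (hH : H.Nonempty) (hHmeas : ∀ h ∈ H, Measurable h)
    (ν ρ : Measure X) [IsProbabilityMeasure ν] [IsProbabilityMeasure ρ]
    (N : ℕ) (μ : Fin N → Measure X) [∀ i, IsProbabilityMeasure (μ i)]
    (α : Fin N → ℝ) (hα : ∀ i, 0 ≤ α i) (hαsum : ∑ i, α i = 1)
    (h hstar : X → Bool) (hhH : h ∈ H) (hhstarH : hstar ∈ H) :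
    risk ν f h ≤
      (risk ν f hstar + ∑ i, α i * risk (μ i) f hstar)
        + ∑ i, α i * risk (μ i) f h
        + dH H ρ (∑ i, ENNReal.ofReal (α i) • μ i)
        + dH H ν ρ :=
  domain_generalization_fictitious_bound_general f H ν ρ N μ α hα h hstar hhH hhstarH
end
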